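/- Let M be a finitely generated ℕ^r-graded module over S = K[x_1,…,x_r]. Then there exists u_0 ∈ ℕ^r such that for all u, v ∈ ℕ^r with u_0 ≼ u ≼ v, the rank invariant ρ_M(u,v) — the rank of the K-linear map M_u → M_v given by multiplication by x^{v−u} — equals rk_S(M). -/

import Mathlib

/-!
Choose finitely many homogeneous generators `g` of degrees `d`. Once `u` dominates every `d`, the
piece `M_u` is spanned over `K` by the `x^(u - d) • g`, so multiplication by `x^(v - u)` maps `M_u`
onto `M_v`; hence `dim M_u` is antitone there and stabilizes from some `u₀` on. Past `u₀`,
multiplication by any monomial is then injective on `M_v`, so comparing homogeneous components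
shows that a `K`-basis of `M_v` is linearly independent over `S`. Every generator has a monomial
multiple in `M_v`, so this basis becomes a basis of `Frac(S) ⊗ M`.
-/

/-- The rank of a module `M` over an integral domain `R`:
`rk_R(M) = dim_Q (M ⊗_R Q)` where `Q` is the fraction field of `R`. -/
noncomputable def rk (R : Type) [CommRing R] (M : Type) [AddCommGroup M] [Module R M] : ℕ :=
  Module.finrank (FractionRing R) (TensorProduct R (FractionRing R) M)

open Module MvPolynomial DirectSum

theorem exists_forall_ge_eq_of_antitoneOn_Ici {α : Type*} [Preorder α] {f : α → ℕ} {a : α}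
    (hf : AntitoneOn f (Set.Ici a)) : ∃ b, a ≤ b ∧ ∀ c, b ≤ c → f c = f b := by
  set b := Function.argminOn f (Set.Ici a) Set.nonempty_Ici
  have hab : a ≤ b := Function.argminOn_mem f _ _
  refine ⟨b, hab, fun c hbc => le_antisymm (hf hab (hab.trans hbc) hbc) ?_⟩
  exact Function.argminOn_le f _ (Set.mem_Ici.mpr (hab.trans hbc))

theorem exists_finset_homogeneous_span_eq_top {ι R M σ : Type*} [DecidableEq ι] [Semiring R]
    [AddCommMonoid M] [Module R M] [Module.Finite R M] [SetLike σ M] [AddSubmonoidClass σ M]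
    (ℳ : ι → σ) [Decomposition ℳ] :
    ∃ s : Finset (ι × M), (∀ p ∈ s, p.2 ∈ ℳ p.1) ∧
      Submodule.span R (Prod.snd '' (s : Set (ι × M))) = ⊤ := by
  classical
  obtain ⟨t, ht⟩ := Module.Finite.fg_top (R := R) (M := M)
  refine ⟨t.biUnion fun m => (decompose ℳ m).support.image fun i => (i, (decompose ℳ m i : M)),
    ?_, ?_⟩
  · simp only [Finset.mem_biUnion, Finset.mem_image]
    rintro _ ⟨m, -, i, -, rfl⟩
    exact (decompose ℳ m i).2
  · refine eq_top_iff.mpr (ht ▸ Submodule.span_le.mpr fun m hm => ?_)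
    rw [← sum_support_decompose ℳ m]
    refine Submodule.sum_mem _ fun i hi => Submodule.subset_span ⟨(i, _), ?_, rfl⟩
    simp only [Finset.coe_biUnion, Finset.coe_image, Set.mem_iUnion, Set.mem_image]
    exact ⟨m, hm, i, hi, rfl⟩

section MonomialGrading

variable {K σ M : Type*} [Field K] [AddCommGroup M] [Module (MvPolynomial σ K) M] [Module K M]

def IsMonomialGrading (ℳ : (σ →₀ ℕ) → Submodule K M) : Prop :=
  ∀ (u v : σ →₀ ℕ) (c : K) (m : M), m ∈ ℳ v → (monomial u c : MvPolynomial σ K) • m ∈ ℳ (u + v)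

theorem decompose_smul_of_mem [DecidableEq σ] {ℳ : (σ →₀ ℕ) → Submodule K M} [Decomposition ℳ]
    (hℳ : IsMonomialGrading ℳ) {v : σ →₀ ℕ} {m : M} (hm : m ∈ ℳ v)
    (q : MvPolynomial σ K) (w : σ →₀ ℕ) :
    (decompose ℳ (q • m) (w + v) : M) = (monomial w (coeff w q) : MvPolynomial σ K) • m := by
  conv_lhs => rw [q.as_sum, Finset.sum_smul, decompose_sum, DFinsupp.finsetSum_apply,
    Submodule.coe_sum]
  rw [Finset.sum_eq_single w (fun a _ haw => ?_) (fun hw => ?_)]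
  · exact decompose_of_mem_same ℳ (hℳ w v _ m hm)
  · exact decompose_of_mem_ne ℳ (hℳ a v _ m hm) (by simpa using haw)
  · rw [notMem_support_iff.mp hw, monomial_zero, zero_smul, decompose_zero, DirectSum.zero_apply,
      ZeroMemClass.coe_zero]

variable [IsScalarTower K (MvPolynomial σ K) M]

variable (K) in
noncomputable def monomialSMul (w : σ →₀ ℕ) : M →ₗ[K] M :=
  (LinearMap.lsmul (MvPolynomial σ K) M (monomial w 1)).restrictScalars K

theorem monomialSMul_apply (w : σ →₀ ℕ) (m : M) :
    monomialSMul K w m = (monomial w (1 : K) : MvPolynomial σ K) • m :=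
  rfl

theorem monomialSMul_monomialSMul (w w' : σ →₀ ℕ) (m : M) :
    monomialSMul K w (monomialSMul K w' m) = monomialSMul K (w + w') m := by
  simp only [monomialSMul_apply, smul_smul, monomial_mul, one_mul]

theorem monomial_smul_eq_smul_monomialSMul (w : σ →₀ ℕ) (c : K) (m : M) :
    (monomial w c : MvPolynomial σ K) • m = c • monomialSMul K w m := by
  rw [monomialSMul_apply, ← smul_assoc, smul_monomial, smul_eq_mul, mul_one]

variable (K) in
def shiftedGenerators (s : Finset ((σ →₀ ℕ) × M)) (v : σ →₀ ℕ) : Set M :=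
  (fun p : (σ →₀ ℕ) × M => monomialSMul K (v - p.1) p.2) '' s

variable [DecidableEq σ] {ℳ : (σ →₀ ℕ) → Submodule K M} [Decomposition ℳ]
  {s : Finset ((σ →₀ ℕ) × M)}

theorem eq_span_shiftedGenerators (hℳ : IsMonomialGrading ℳ) (hs : ∀ p ∈ s, p.2 ∈ ℳ p.1)
    (hspan : Submodule.span (MvPolynomial σ K) (Prod.snd '' (s : Set ((σ →₀ ℕ) × M))) = ⊤)
    {u : σ →₀ ℕ} (hu : ∀ p ∈ s, p.1 ≤ u) :
    ℳ u = Submodule.span K (shiftedGenerators K s u) := by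
  refine le_antisymm (fun m hm => ?_) (Submodule.span_le.mpr ?_)
  · have hm' : m ∈ Submodule.span (MvPolynomial σ K) (Prod.snd '' (s : Set ((σ →₀ ℕ) × M))) :=
      hspan ▸ Submodule.mem_top
    rw [Submodule.mem_span_image_finset_iff_exists_fun'] at hm'
    obtain ⟨c, hc⟩ := hm'
    rw [← decompose_of_mem_same ℳ hm, ← hc, decompose_sum, DFinsupp.finsetSum_apply,
      Submodule.coe_sum]
    refine Submodule.sum_mem _ fun p hp => ?_
    rw [← tsub_add_cancel_of_le (hu p hp), decompose_smul_of_mem hℳ (hs p hp),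
      monomial_smul_eq_smul_monomialSMul, tsub_add_cancel_of_le (hu p hp)]
    exact Submodule.smul_mem _ _ (Submodule.subset_span ⟨p, hp, rfl⟩)
  · rintro _ ⟨p, hp, rfl⟩
    have := hℳ (u - p.1) p.1 1 p.2 (hs p hp)
    rwa [tsub_add_cancel_of_le (hu p hp)] at this

theorem map_monomialSMul_eq (hℳ : IsMonomialGrading ℳ) (hs : ∀ p ∈ s, p.2 ∈ ℳ p.1)
    (hspan : Submodule.span (MvPolynomial σ K) (Prod.snd '' (s : Set ((σ →₀ ℕ) × M))) = ⊤)
    {u v : σ →₀ ℕ} (hu : ∀ p ∈ s, p.1 ≤ u) (huv : u ≤ v) :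
    (ℳ u).map (monomialSMul K (v - u)) = ℳ v := by
  rw [eq_span_shiftedGenerators hℳ hs hspan hu,
    eq_span_shiftedGenerators hℳ hs hspan fun p hp => (hu p hp).trans huv,
    Submodule.map_span, shiftedGenerators, shiftedGenerators, Set.image_image]
  refine congrArg _ (Set.image_congr fun p hp => ?_)
  rw [monomialSMul_monomialSMul, tsub_add_tsub_cancel huv (hu p hp)]

theorem finiteDimensional_of_forall_le (hℳ : IsMonomialGrading ℳ) (hs : ∀ p ∈ s, p.2 ∈ ℳ p.1)
    (hspan : Submodule.span (MvPolynomial σ K) (Prod.snd '' (s : Set ((σ →₀ ℕ) × M))) = ⊤)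
    {u : σ →₀ ℕ} (hu : ∀ p ∈ s, p.1 ≤ u) : FiniteDimensional K (ℳ u) := by
  rw [eq_span_shiftedGenerators hℳ hs hspan hu]
  exact FiniteDimensional.span_of_finite K (s.finite_toSet.image _)

theorem linearIndependent_of_disjoint_ker_monomialSMul (hℳ : IsMonomialGrading ℳ)
    {v : σ →₀ ℕ} {ι : Type*} {b : ι → M} (hbv : ∀ i, b i ∈ ℳ v) (hb : LinearIndependent K b)
    (hinj : ∀ w : σ →₀ ℕ, Disjoint (ℳ v) (LinearMap.ker (monomialSMul K w))) :
    LinearIndependent (MvPolynomial σ K) b := by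
  rw [linearIndependent_iff'] at hb ⊢
  intro t g hg i hi
  ext w
  have hcomp : monomialSMul K w (∑ j ∈ t, coeff w (g j) • b j) = 0 := by
    have := congrArg (fun x => (decompose ℳ x (w + v) : M)) hg
    rw [decompose_sum, DFinsupp.finsetSum_apply, Submodule.coe_sum, decompose_zero] at this
    simpa only [decompose_smul_of_mem hℳ (hbv _), monomial_smul_eq_smul_monomialSMul, map_sum,
      map_smul, DirectSum.zero_apply, ZeroMemClass.coe_zero] using this
  have hmem : ∑ j ∈ t, coeff w (g j) • b j ∈ ℳ v :=
    Submodule.sum_mem _ fun j _ => Submodule.smul_mem _ _ (hbv j)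
  simpa using hb t _ (Submodule.disjoint_def.mp (hinj w) _ hmem hcomp) i hi

end MonomialGrading

theorem rk_eq_card_of_linearIndependent {R M : Type} [CommRing R] [IsDomain R] [AddCommGroup M]
    [Module R M] {ι : Type*} [Fintype ι] {b : ι → M} (hb : LinearIndependent R b) {g : Set M}
    (hg : Submodule.span R g = ⊤)
    (htors : ∀ m ∈ g, ∃ a : R, a ≠ 0 ∧ a • m ∈ Submodule.span R (Set.range b)) :
    rk R M = Fintype.card ι := by
  let ψ := TensorProduct.mk R (FractionRing R) M 1
  have hψ : ∀ m ∈ g, ψ m ∈ Submodule.span (FractionRing R) (Set.range (ψ ∘ b)) := by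
    intro m hm
    obtain ⟨a, ha, ham⟩ := htors m hm
    have hψam : ψ (a • m) ∈ Submodule.span (FractionRing R) (Set.range (ψ ∘ b)) := by
      refine Submodule.span_subset_span R _ _ ?_
      rw [Set.range_comp, ← Submodule.map_span]
      exact Submodule.mem_map_of_mem ham
    rwa [map_smul, ← algebraMap_smul (FractionRing R), Submodule.smul_mem_iff _
      ((map_ne_zero_iff _ (IsFractionRing.injective R _)).mpr ha)] at hψam
  have hspan : ⊤ ≤ Submodule.span (FractionRing R) (Set.range (ψ ∘ b)) := by
    rw [← span_eq_top_of_isLocalizedModule (FractionRing R) (nonZeroDivisors R) ψ hg,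
      Submodule.span_le]
    rintro _ ⟨m, hm, rfl⟩
    exact hψ m hm
  exact finrank_eq_card_basis (Basis.mk (hb.of_isLocalizedModule _ (nonZeroDivisors R) ψ) hspan)

section Rank

variable {K σ M : Type} [Field K] [DecidableEq σ] [AddCommGroup M]
  [Module (MvPolynomial σ K) M] [Module K M] [IsScalarTower K (MvPolynomial σ K) M]
  {ℳ : (σ →₀ ℕ) → Submodule K M} [Decomposition ℳ] {s : Finset ((σ →₀ ℕ) × M)}

theorem finrank_eq_rk_of_forall_finrank_add_eq (hℳ : IsMonomialGrading ℳ)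
    (hs : ∀ p ∈ s, p.2 ∈ ℳ p.1)
    (hspan : Submodule.span (MvPolynomial σ K) (Prod.snd '' (s : Set ((σ →₀ ℕ) × M))) = ⊤)
    {v : σ →₀ ℕ} (hv : ∀ p ∈ s, p.1 ≤ v) (hstab : ∀ w, finrank K (ℳ (v + w)) = finrank K (ℳ v)) :
    finrank K (ℳ v) = rk (MvPolynomial σ K) M := by
  have := finiteDimensional_of_forall_le hℳ hs hspan hv
  have hinj (w : σ →₀ ℕ) : Disjoint (ℳ v) (LinearMap.ker (monomialSMul K w)) := by
    have hmap := map_monomialSMul_eq hℳ hs hspan hv (le_self_add : v ≤ v + w)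
    rw [add_tsub_cancel_left] at hmap
    exact Submodule.disjoint_ker_of_finrank_le _ (by rw [hmap, hstab])
  let b := Module.finBasis K (ℳ v)
  have hbspan : Submodule.span K (Set.range fun i => (b i : M)) = ℳ v := by
    rw [show (fun i => (b i : M)) = (ℳ v).subtype ∘ b from rfl, Set.range_comp,
      Submodule.span_image, b.span_eq, Submodule.map_top, Submodule.range_subtype]
  have hbli := linearIndependent_of_disjoint_ker_monomialSMul hℳ (fun i => (b i).2)
    (b.linearIndependent.map' _ (ℳ v).ker_subtype) hinj
  rw [rk_eq_card_of_linearIndependent hbli hspan, Fintype.card_fin]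
  rintro _ ⟨p, hp, rfl⟩
  refine ⟨monomial (v - p.1) 1, monomial_eq_zero.not.mpr one_ne_zero,
    Submodule.span_le_restrictScalars K _ _ ?_⟩
  rw [hbspan]
  simpa [tsub_add_cancel_of_le (hv p hp)] using hℳ (v - p.1) p.1 1 p.2 (hs p hp)

end Rank

theorem statement14 (K : Type) [Field K] (r : ℕ)
    (M : Type) [AddCommGroup M] [Module (MvPolynomial (Fin r) K) M]
    [Module K M] [IsScalarTower K (MvPolynomial (Fin r) K) M]
    [Module.Finite (MvPolynomial (Fin r) K) M]
    (ℳ : (Fin r →₀ ℕ) → Submodule K M)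
    (hM : DirectSum.IsInternal ℳ)
    (hMgr : ∀ (u v : Fin r →₀ ℕ) (c : K) (m : M), m ∈ ℳ v →
      (MvPolynomial.monomial u c) • m ∈ ℳ (u + v)) :
    ∃ u₀ : Fin r →₀ ℕ, ∀ u v : Fin r →₀ ℕ, u₀ ≤ u → u ≤ v →
      ∀ f : ↥(ℳ u) →ₗ[K] ↥(ℳ v),
        (∀ m : ↥(ℳ u), (f m : M) = (MvPolynomial.monomial (v - u) (1 : K)) • (m : M)) →
        Module.finrank K ↥(LinearMap.range f) = rk (MvPolynomial (Fin r) K) M := by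
  let := hM.chooseDecomposition
  obtain ⟨s, hs, hspan⟩ := exists_finset_homogeneous_span_eq_top (R := MvPolynomial (Fin r) K) ℳ
  have hbound {u : Fin r →₀ ℕ} (hu : s.sup Prod.fst ≤ u) : ∀ p ∈ s, p.1 ≤ u :=
    fun p hp => (Finset.le_sup (f := Prod.fst) hp).trans hu
  have hanti : AntitoneOn (fun u => finrank K (ℳ u)) (Set.Ici (s.sup Prod.fst)) := by
    intro u hu v _ huv
    have := finiteDimensional_of_forall_le hMgr hs hspan (hbound hu)
    show finrank K (ℳ v) ≤ finrank K (ℳ u)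
    rw [← map_monomialSMul_eq hMgr hs hspan (hbound hu) huv]
    exact Submodule.finrank_map_le _ _
  obtain ⟨u₀, hu₀, hstab⟩ := exists_forall_ge_eq_of_antitoneOn_Ici hanti
  refine ⟨u₀, fun u v hu huv f hf => ?_⟩
  have hrange : (LinearMap.range f).map (ℳ v).subtype = ℳ v := by
    rw [← LinearMap.range_comp,
      show (ℳ v).subtype ∘ₗ f = monomialSMul K (v - u) ∘ₗ (ℳ u).subtype from LinearMap.ext hf,
      LinearMap.range_comp, Submodule.range_subtype,
      map_monomialSMul_eq hMgr hs hspan (hbound (hu₀.trans hu)) huv]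
  rw [← Submodule.finrank_map_subtype_eq, hrange]
  have hv : u₀ ≤ v := hu.trans huv
  exact finrank_eq_rk_of_forall_finrank_add_eq hMgr hs hspan (hbound (hu₀.trans hv))
    fun w => (hstab _ (hv.trans le_self_add)).trans (hstab v hv).symm
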